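/- For every k ∈ ℝ^p and mv ∈ ℝ^r, writing c = (k, mv) ∈ ℝ^{p+r} and d = k − XᵀV⁻¹Z G mv, one has cᵀ K⁻¹ c = mvᵀ (G − G Zᵀ V⁻¹ Z G) mv + dᵀ (XᵀV⁻¹X)⁻¹ d. (This is the matrix-level decomposition mse₁(μ̂ᵢ) = cᵢᵀK⁻¹cᵢ = g₁ᵢ(θ) + g₂ᵢ(θ) of the first-order MSE of the mixed parameter μᵢ = kᵢᵀβ + mᵢᵀuᵢ.) -/

import Mathlib

/-!
With `V = R + Z G Zᵀ`, the identity `R⁻¹ Z G Zᵀ V⁻¹ = R⁻¹ - V⁻¹` lets one check directly that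
`K⁻¹` is the block matrix with blocks `A`, `-A W`, `-Wᵀ A`, `G - G Zᵀ V⁻¹ Z G + Wᵀ A W`, where
`A = (Xᵀ V⁻¹ X)⁻¹` and `W = Xᵀ V⁻¹ Z G`. The quadratic form of such a block matrix at `(k, mv)`
is `mvᵀ (G - G Zᵀ V⁻¹ Z G) mv + (k - W mv)ᵀ A (k - W mv)` by completing the square.
-/

open Matrix

namespace Matrix

universe u

variable {l n o : Type u} [Fintype n]

theorem mulVec_injective_of_rank_eq_card {K : Type*} [Field K] {A : Matrix l n K}
    (h : A.rank = Fintype.card n) : Function.Injective A.mulVec :=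
  mulVec_injective_iff.2 <| linearIndependent_iff_card_eq_finrank_span.2 <| by
    rw [← h, rank_eq_finrank_span_cols]; rfl

variable [Fintype l] [Fintype o]

theorem PosDef.add_mul_mul_transpose_same {R : Matrix l l ℝ} {G : Matrix o o ℝ}
    (hR : R.PosDef) (hG : G.PosSemidef) (Z : Matrix l o ℝ) : (R + Z * G * Zᵀ).PosDef := by
  simpa using hR.add_posSemidef (hG.mul_mul_conjTranspose_same Z)

theorem PosDef.transpose_mul_mul_same_of_rank_eq_card [DecidableEq n] {V : Matrix l l ℝ}
    (hV : V.PosDef) {X : Matrix l n ℝ} (hX : X.rank = Fintype.card n) :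
    (Xᵀ * V * X).PosDef := by
  simpa using hV.conjTranspose_mul_mul_same (mulVec_injective_of_rank_eq_card hX)

section CommRing

variable {α : Type*} [CommRing α]

theorem sumElim_dotProduct_fromBlocks_mulVec_sumElim (A : Matrix n n α) (W : Matrix n o α)
    (D : Matrix o o α) (k : n → α) (v : o → α) :
    Sum.elim k v ⬝ᵥ (fromBlocks A (-(A * W)) (-(Wᵀ * A)) (D + Wᵀ * A * W) *ᵥ Sum.elim k v)
      = v ⬝ᵥ (D *ᵥ v) + (k - W *ᵥ v) ⬝ᵥ (A *ᵥ (k - W *ᵥ v)) := by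
  simp only [fromBlocks_mulVec, sumElim_dotProduct_sumElim, add_mulVec, neg_mulVec,
    ← mulVec_mulVec, dotProduct_add, dotProduct_neg, mulVec_sub, sub_dotProduct,
    dotProduct_sub, dotProduct_mulVec _ Wᵀ, vecMul_transpose, Sum.elim_comp_inl, Sum.elim_comp_inr]
  ring

variable [DecidableEq l]

theorem inv_mul_mul_inv_add {R : Matrix l l α} (B : Matrix l l α) (hR : IsUnit R.det)
    (hRB : IsUnit (R + B).det) : R⁻¹ * B * (R + B)⁻¹ = R⁻¹ - (R + B)⁻¹ := by
  calc R⁻¹ * B * (R + B)⁻¹ = R⁻¹ * (R + B) * (R + B)⁻¹ - R⁻¹ * R * (R + B)⁻¹ := by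
        rw [Matrix.mul_add, Matrix.add_mul, add_sub_cancel_left]
    _ = R⁻¹ - (R + B)⁻¹ := by
        rw [Matrix.mul_assoc, mul_nonsing_inv _ hRB, nonsing_inv_mul _ hR, Matrix.mul_one,
          Matrix.one_mul]

theorem inv_fromBlocks_henderson [DecidableEq n] [DecidableEq o]
    {R V : Matrix l l α} {G : Matrix o o α} {X : Matrix l n α} {Z : Matrix l o α}
    {A : Matrix n n α} {W : Matrix n o α} (hRs : R.IsSymm) (hGs : G.IsSymm)
    (hR : IsUnit R.det) (hG : IsUnit G.det) (hVdef : V = R + Z * G * Zᵀ) (hV : IsUnit V.det)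
    (hA : Xᵀ * V⁻¹ * X * A = 1) (hW : W = Xᵀ * V⁻¹ * Z * G) :
    (fromBlocks (Xᵀ * R⁻¹ * X) (Xᵀ * R⁻¹ * Z) (Zᵀ * R⁻¹ * X) (Zᵀ * R⁻¹ * Z + G⁻¹))⁻¹
      = fromBlocks A (-(A * W)) (-(Wᵀ * A)) (G - G * Zᵀ * V⁻¹ * Z * G + Wᵀ * A * W) := by
  have hVs : V⁻¹.IsSymm := by
    rw [hVdef]
    exact (hRs.add (by simp [IsSymm, transpose_mul, hGs.eq, Matrix.mul_assoc])).inv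
  have hWt : Wᵀ = G * Zᵀ * V⁻¹ * X := by
    simp only [hW, transpose_mul, transpose_transpose, hGs.eq, hVs.eq, Matrix.mul_assoc]
  have hRZGV : R⁻¹ * (Z * G * Zᵀ) * V⁻¹ = R⁻¹ - V⁻¹ := by
    subst hVdef
    exact inv_mul_mul_inv_add _ hR hV
  have hRV : ∀ {q : Type u} [Fintype q] (T : Matrix l q α),
      R⁻¹ * (Z * (G * (Zᵀ * (V⁻¹ * T)))) = R⁻¹ * T - V⁻¹ * T := by
    intro q _ T
    rw [← Matrix.sub_mul, ← hRZGV]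
    simp only [Matrix.mul_assoc]
  have hGG : ∀ {q : Type u} [Fintype q] (T : Matrix o q α), G⁻¹ * (G * T) = T := by
    intro q _ T
    rw [← Matrix.mul_assoc, nonsing_inv_mul _ hG, Matrix.one_mul]
  have hAA : ∀ {q : Type u} [Fintype q] (T : Matrix n q α), Xᵀ * (V⁻¹ * (X * (A * T))) = T := by
    intro q _ T
    simp only [← Matrix.mul_assoc, hA, Matrix.one_mul]
  have hA' : Xᵀ * (V⁻¹ * (X * A)) = 1 := by simpa only [Matrix.mul_assoc] using hA
  apply inv_eq_right_inv
  rw [fromBlocks_multiply, ← fromBlocks_one, hWt, hW]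
  simp only [Matrix.mul_add, Matrix.mul_sub, Matrix.mul_neg, Matrix.add_mul,
      Matrix.mul_assoc, hRV, hGG, hAA, hA', nonsing_inv_mul _ hG]
  rw [fromBlocks_inj]
  refine ⟨by abel, by simp, by simp, by abel⟩

end CommRing

end Matrix

theorem stmt11_general {m p r : ℕ}
    (X : Matrix (Fin m) (Fin p) ℝ) (Z : Matrix (Fin m) (Fin r) ℝ)
    (R : Matrix (Fin m) (Fin m) ℝ) (G : Matrix (Fin r) (Fin r) ℝ)
    (hR : R.PosDef) (hG : G.PosDef)
    (hX : X.rank = p)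
    (V : Matrix (Fin m) (Fin m) ℝ) (hV : V = R + Z * G * Zᵀ)
    (K : Matrix (Fin p ⊕ Fin r) (Fin p ⊕ Fin r) ℝ)
    (hK : K = fromBlocks (Xᵀ * R⁻¹ * X) (Xᵀ * R⁻¹ * Z)
        (Zᵀ * R⁻¹ * X) (Zᵀ * R⁻¹ * Z + G⁻¹))
    (k : Fin p → ℝ) (mv : Fin r → ℝ)
    (c : Fin p ⊕ Fin r → ℝ) (hc : c = Sum.elim k mv)
    (d : Fin p → ℝ) (hd : d = k - (Xᵀ * V⁻¹ * Z * G) *ᵥ mv) :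
    c ⬝ᵥ (K⁻¹ *ᵥ c)
      = mv ⬝ᵥ ((G - G * Zᵀ * V⁻¹ * Z * G) *ᵥ mv)
        + d ⬝ᵥ ((Xᵀ * V⁻¹ * X)⁻¹ *ᵥ d) := by
  have hVpd : V.PosDef := hV ▸ hR.add_mul_mul_transpose_same hG.posSemidef Z
  have hApd : (Xᵀ * V⁻¹ * X).PosDef :=
    hVpd.inv.transpose_mul_mul_same_of_rank_eq_card (by rwa [Fintype.card_fin])
  have hKinv := inv_fromBlocks_henderson (isHermitian_iff_isSymm.1 hR.1)
    (isHermitian_iff_isSymm.1 hG.1) ((isUnit_iff_isUnit_det R).1 hR.isUnit)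
    ((isUnit_iff_isUnit_det G).1 hG.isUnit) hV ((isUnit_iff_isUnit_det V).1 hVpd.isUnit)
    (mul_nonsing_inv _ ((isUnit_iff_isUnit_det _).1 hApd.isUnit)) rfl
  rw [hK, hKinv, hc, hd, sumElim_dotProduct_fromBlocks_mulVec_sumElim]

/-- Matrix-level decomposition of the first-order MSE of the mixed parameter:
for `c = (k, mv)` and `d = k − XᵀV⁻¹Z G mv`,
`cᵀK⁻¹c = mvᵀ(G − GZᵀV⁻¹ZG)mv + dᵀ(XᵀV⁻¹X)⁻¹d`,
i.e. `mse₁(μ̂ᵢ) = cᵢᵀK⁻¹cᵢ = g₁ᵢ(θ) + g₂ᵢ(θ)`. -/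
theorem stmt11 {m p r : ℕ} (hm : 0 < m) (hp : 0 < p) (hr : 0 < r)
    (X : Matrix (Fin m) (Fin p) ℝ) (Z : Matrix (Fin m) (Fin r) ℝ)
    (R : Matrix (Fin m) (Fin m) ℝ) (G : Matrix (Fin r) (Fin r) ℝ)
    (hR : R.PosDef) (hG : G.PosDef)
    (hX : X.rank = p)
    (V : Matrix (Fin m) (Fin m) ℝ) (hV : V = R + Z * G * Zᵀ)
    (K : Matrix (Fin p ⊕ Fin r) (Fin p ⊕ Fin r) ℝ)
    (hK : K = fromBlocks (Xᵀ * R⁻¹ * X) (Xᵀ * R⁻¹ * Z)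
        (Zᵀ * R⁻¹ * X) (Zᵀ * R⁻¹ * Z + G⁻¹))
    (k : Fin p → ℝ) (mv : Fin r → ℝ)
    (c : Fin p ⊕ Fin r → ℝ) (hc : c = Sum.elim k mv)
    (d : Fin p → ℝ) (hd : d = k - (Xᵀ * V⁻¹ * Z * G) *ᵥ mv) :
    c ⬝ᵥ (K⁻¹ *ᵥ c)
      = mv ⬝ᵥ ((G - G * Zᵀ * V⁻¹ * Z * G) *ᵥ mv)
        + d ⬝ᵥ ((Xᵀ * V⁻¹ * X)⁻¹ *ᵥ d) :=
  stmt11_general X Z R G hR hG hX V hV K hK k mv c hc d hd
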